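/- arXiv:1903.05395 — 3 statements merged into one kernel-verified Lean document; each statement's English description precedes it below -/
import Mathlib

section
/- Let M be a factor with separable predual that is not full. Then there exists θ in the closure of Inn(M) in Aut(M) with θ ∉ Inn(M), and the M-M-correspondence L²(θ) is weakly equivalent to L²(M) but does not contain L²(M). In particular, if every M-M-correspondence weakly equivalent to L²(M) contains L²(M), then M is full. -/
/- ## Preliminary definitions (operator algebras)

We work with concrete von Neumann algebras `M ⊆ B(H)` on complex Hilbert spaces,
using Mathlib's `VonNeumannAlgebra H`.  Below we set up, for subsets `S` of `B(H)`:
commutants, projections, diffuse/atomic algebras, the weak operator topology, normal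
functionals and maps (σ-weak continuity is equivalent to weak-operator continuity on
bounded parts), conditional expectations, co-amenability, fullness (via centralizing
nets), Ocneanu ultrapowers (via representing sequences: `UltraNull` describes the
ideal `ℐ_ω` and `UltraMult` the multiplier algebra `𝔐^ω`, so that `S^ω = 𝔐^ω/ℐ_ω`),
group actions, crossed products (pinned down by the regular covariant representation
on `L²(G, H)`), Haagerup standard forms, correspondences and multi-matrix algebras. -/

noncomputable section

open Filter Topology MeasureTheory ContinuousLinearMap
open scoped Matrix.Norms.L2Operator

universe u v w x

section OperatorPreliminaries

variable {H : Type u} [NormedAddCommGroup H] [InnerProductSpace ℂ H] [CompleteSpace H]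

/-- The commutant of a set of bounded operators. -/
def commutantS (S : Set (H →L[ℂ] H)) : Set (H →L[ℂ] H) :=
  {x | ∀ y ∈ S, x * y = y * x}

/-- The von Neumann algebra generated by a set of operators (double commutant). -/
def genVN (S : Set (H →L[ℂ] H)) : Set (H →L[ℂ] H) :=
  commutantS (commutantS S)

/-- A set of operators consists only of scalar multiples of the identity (`S ⊆ ℂ1`).
For a unital subalgebra this says exactly `S = ℂ1`. -/
def TrivialS (S : Set (H →L[ℂ] H)) : Prop :=
  ∀ x ∈ S, ∃ c : ℂ, x = c • (1 : H →L[ℂ] H)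

/-- A von Neumann algebra is a factor iff its center is trivial. -/
def IsFactorS (S : Set (H →L[ℂ] H)) : Prop :=
  TrivialS (S ∩ commutantS S)

/-- Orthogonal projections among operators. -/
def IsProjOp (e : H →L[ℂ] H) : Prop :=
  e * e = e ∧ star e = e

/-- `e` is a minimal (nonzero) projection of the set `S`. -/
def IsMinProjIn (S : Set (H →L[ℂ] H)) (e : H →L[ℂ] H) : Prop :=
  e ∈ S ∧ IsProjOp e ∧ e ≠ 0 ∧
    ∀ f ∈ S, IsProjOp f → f * e = f → f = 0 ∨ f = e

/-- A von Neumann algebra is diffuse if it contains no nonzero minimal projection. -/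
def DiffuseS (S : Set (H →L[ℂ] H)) : Prop :=
  ∀ e, ¬ IsMinProjIn S e

/-- A von Neumann algebra is completely atomic if every nonzero projection dominates
a nonzero minimal projection. -/
def CompletelyAtomicS (S : Set (H →L[ℂ] H)) : Prop :=
  ∀ e ∈ S, IsProjOp e → e ≠ 0 → ∃ f, IsMinProjIn S f ∧ f * e = f

/-- `u` is a unitary belonging to `S`. -/
def IsUnitaryIn (S : Set (H →L[ℂ] H)) (u : H →L[ℂ] H) : Prop :=
  u ∈ S ∧ star u * u = 1 ∧ u * star u = 1

/-- The weak operator topology on bounded operators. -/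
def wot (H : Type u) [NormedAddCommGroup H] [InnerProductSpace ℂ H] :
    TopologicalSpace (H →L[ℂ] H) :=
  TopologicalSpace.induced
    (fun (a : H →L[ℂ] H) => fun p : H × H => (inner ℂ p.1 (a p.2) : ℂ)) Pi.topologicalSpace

/-- A normal (= σ-weakly continuous) linear functional on the von Neumann algebra `S`:
a linear functional which is weak-operator continuous on bounded parts of `S`. -/
def IsNormalFunctionalOn (S : Set (H →L[ℂ] H)) (φ : (H →L[ℂ] H) → ℂ) : Prop :=
  (∀ x ∈ S, ∀ y ∈ S, φ (x + y) = φ x + φ y) ∧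
  (∀ (c : ℂ), ∀ x ∈ S, φ (c • x) = c * φ x) ∧
  (∀ r : ℝ, @ContinuousOn _ _ (wot H) _ φ {x | x ∈ S ∧ ‖x‖ ≤ r})

variable {K : Type v} [NormedAddCommGroup K] [InnerProductSpace ℂ K] [CompleteSpace K]

/-- A map between (subsets of) operator algebras is normal iff it is weak-operator
continuous on bounded parts of its domain. -/
def IsNormalMapOn (S : Set (H →L[ℂ] H)) (E : (H →L[ℂ] H) → (K →L[ℂ] K)) : Prop :=
  ∀ r : ℝ, @ContinuousOn _ _ (wot H) (wot K) E {x | x ∈ S ∧ ‖x‖ ≤ r}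

/-- A conditional expectation from `A` onto `B ⊆ A`: a positive contractive linear
projection onto `B` which is a `B`-bimodule map. -/
def IsCondExp (A B : Set (H →L[ℂ] H)) (E : (H →L[ℂ] H) → (H →L[ℂ] H)) : Prop :=
  (∀ x ∈ A, E x ∈ B) ∧ (∀ x ∈ B, E x = x) ∧
  (∀ x ∈ A, ∀ y ∈ A, E (x + y) = E x + E y) ∧
  (∀ (c : ℂ), ∀ x ∈ A, E (c • x) = c • E x) ∧
  (∀ x ∈ A, x.IsPositive → (E x).IsPositive) ∧
  (∀ b₁ ∈ B, ∀ x ∈ A, ∀ b₂ ∈ B, E (b₁ * x * b₂) = b₁ * E x * b₂) ∧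
  (∀ x ∈ A, ‖E x‖ ≤ ‖x‖)

/-- Co-amenability of an inclusion `N ⊆ M` of von Neumann algebras on `H`: there exists
a (not necessarily normal) conditional expectation `Φ : N′ → M′` between the commutants. -/
def CoAmenableS (N M : Set (H →L[ℂ] H)) : Prop :=
  ∃ E, IsCondExp (commutantS N) (commutantS M) E

/-- Faithfulness of a positive map on `A`. -/
def FaithfulOn (A : Set (H →L[ℂ] H)) (E : (H →L[ℂ] H) → (H →L[ℂ] H)) : Prop :=
  ∀ x ∈ A, x.IsPositive → E x = 0 → x = 0

/-- The inclusion `N ⊆ M` is with expectation: there is a faithful normal conditional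
expectation of `M` onto `N`. -/
def WithExpectation (M N : Set (H →L[ℂ] H)) : Prop :=
  ∃ E, IsCondExp M N E ∧ IsNormalMapOn M E ∧ FaithfulOn M E

/-- Fullness of the von Neumann algebra `S`: every norm-bounded centralizing net
(i.e. `‖φ(·x_i) - φ(x_i·)‖ → 0` for every normal functional `φ`) is trivial: it is
asymptotically scalar in the strong-* topology. -/
def IsFullS (S : Set (H →L[ℂ] H)) : Prop :=
  ∀ (ι : Type u) (l : Filter ι), l.NeBot → ∀ xnet : ι → H →L[ℂ] H,
    (∀ i, xnet i ∈ S) → (∃ C : ℝ, ∀ i, ‖xnet i‖ ≤ C) →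
    (∀ φ : (H →L[ℂ] H) → ℂ, IsNormalFunctionalOn S φ →
      Tendsto (fun i => sSup {r : ℝ | ∃ y ∈ S, ‖y‖ ≤ 1 ∧
        r = ‖φ (y * xnet i) - φ (xnet i * y)‖}) l (𝓝 0)) →
    ∃ z : ι → ℂ, (∃ C : ℝ, ∀ i, ‖z i‖ ≤ C) ∧
      ∀ ξ : H, Tendsto
        (fun i => ‖xnet i ξ - z i • ξ‖ + ‖star (xnet i) ξ - (starRingEnd ℂ) (z i) • ξ‖)
        l (𝓝 0)

/-- Membership in the ideal `ℐ_ω(S)`: bounded sequences in `S` converging to `0`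
*-strongly along the ultrafilter `ω`. -/
def UltraNull (S : Set (H →L[ℂ] H)) (ω : Ultrafilter ℕ) (x : ℕ → H →L[ℂ] H) : Prop :=
  (∀ n, x n ∈ S) ∧ (∃ C : ℝ, ∀ n, ‖x n‖ ≤ C) ∧
  ∀ ξ : H, Tendsto (fun n => ‖x n ξ‖ + ‖star (x n) ξ‖) (↑ω) (𝓝 0)

/-- Membership in the multiplier algebra `𝔐^ω(S)`: bounded sequences in `S`
which multiply the ideal `ℐ_ω(S)` into itself.  The Ocneanu ultrapower `S^ω` is the
quotient C*-algebra (in fact von Neumann algebra) `𝔐^ω(S)/ℐ_ω(S)`, so that elements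
of `S^ω` are represented by sequences satisfying `UltraMult`, and two sequences
represent the same element iff their difference satisfies `UltraNull`. -/
def UltraMult (S : Set (H →L[ℂ] H)) (ω : Ultrafilter ℕ) (x : ℕ → H →L[ℂ] H) : Prop :=
  (∀ n, x n ∈ S) ∧ (∃ C : ℝ, ∀ n, ‖x n‖ ≤ C) ∧
  ∀ y : ℕ → H →L[ℂ] H, UltraNull S ω y →
    UltraNull S ω (fun n => x n * y n) ∧ UltraNull S ω (fun n => y n * x n)

/-- A normal faithful state on `S`. -/
def IsNFStateOn (S : Set (H →L[ℂ] H)) (φ : (H →L[ℂ] H) → ℂ) : Prop :=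
  IsNormalFunctionalOn S φ ∧ φ 1 = 1 ∧
  (∀ x ∈ S, ∃ r : ℝ, 0 ≤ r ∧ φ (star x * x) = r) ∧
  (∀ x ∈ S, φ (star x * x) = 0 → x = 0)

/-- A normal faithful tracial state on `S`. -/
def IsNFTracialState (S : Set (H →L[ℂ] H)) (τ : (H →L[ℂ] H) → ℂ) : Prop :=
  IsNFStateOn S τ ∧ ∀ x ∈ S, ∀ y ∈ S, τ (x * y) = τ (y * x)

/-- The `2`-norm associated to a trace. -/
def l2n (τ : (H →L[ℂ] H) → ℂ) (x : H →L[ℂ] H) : ℝ :=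
  Real.sqrt (τ (star x * x)).re

/-- A *-automorphism of the von Neumann algebra `M` (automatically normal). -/
def IsAutoOn (M : Set (H →L[ℂ] H)) (θ : (H →L[ℂ] H) → (H →L[ℂ] H)) : Prop :=
  (∀ x ∈ M, θ x ∈ M) ∧ (∀ y ∈ M, ∃ x ∈ M, θ x = y) ∧
  (∀ x ∈ M, ∀ y ∈ M, θ x = θ y → x = y) ∧
  (∀ x ∈ M, ∀ y ∈ M, θ (x + y) = θ x + θ y) ∧
  (∀ (c : ℂ), ∀ x ∈ M, θ (c • x) = c • θ x) ∧
  (∀ x ∈ M, ∀ y ∈ M, θ (x * y) = θ x * θ y) ∧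
  (∀ x ∈ M, θ (star x) = star (θ x))

/-- `θ` is an inner automorphism `Ad(u)` of `M`. -/
def InnerAuto (M : Set (H →L[ℂ] H)) (θ : (H →L[ℂ] H) → (H →L[ℂ] H)) : Prop :=
  ∃ u, IsUnitaryIn M u ∧ ∀ x ∈ M, θ x = u * x * star u

/-- `θ` belongs to the closure of the inner automorphisms of `M` inside `Aut(M)`
(with its usual `u`-topology: `α_i → α` iff `‖φ ∘ α_i - φ ∘ α‖ → 0` for all normal
functionals `φ`). -/
def InUClosureInn (M : Set (H →L[ℂ] H)) (θ : (H →L[ℂ] H) → (H →L[ℂ] H)) : Prop :=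
  ∀ ε : ℝ, 0 < ε → ∀ (m : ℕ) (φs : Fin m → ((H →L[ℂ] H) → ℂ)),
    (∀ i, IsNormalFunctionalOn M (φs i)) →
    ∃ u, IsUnitaryIn M u ∧ ∀ i, ∀ y ∈ M, ‖y‖ ≤ 1 →
      ‖φs i (θ y) - φs i (u * y * star u)‖ ≤ ε

/-- `Inn(M)` is closed in `Aut(M)`. -/
def InnClosed (M : Set (H →L[ℂ] H)) : Prop :=
  ∀ θ, IsAutoOn M θ → InUClosureInn M θ → InnerAuto M θ

end OperatorPreliminaries

section ActionsAndForms

variable {H : Type u} [NormedAddCommGroup H] [InnerProductSpace ℂ H] [CompleteSpace H]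

/-- A (point-strongly continuous) action of a topological group `G` on a von Neumann
algebra `M ⊆ B(H)` by *-automorphisms. -/
structure VNAction (G : Type w) [Group G] [TopologicalSpace G]
    {H : Type u} [NormedAddCommGroup H] [InnerProductSpace ℂ H] [CompleteSpace H]
    (M : Set (H →L[ℂ] H)) where
  σ : G → (H →L[ℂ] H) → (H →L[ℂ] H)
  mem' : ∀ g, ∀ x ∈ M, σ g x ∈ M
  one' : ∀ x ∈ M, σ 1 x = x
  mul' : ∀ g h, ∀ x ∈ M, σ (g * h) x = σ g (σ h x)
  add' : ∀ g, ∀ x ∈ M, ∀ y ∈ M, σ g (x + y) = σ g x + σ g y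
  smul' : ∀ g (c : ℂ), ∀ x ∈ M, σ g (c • x) = c • σ g x
  map_mul' : ∀ g, ∀ x ∈ M, ∀ y ∈ M, σ g (x * y) = σ g x * σ g y
  star' : ∀ g, ∀ x ∈ M, σ g (star x) = star (σ g x)
  cont' : ∀ x ∈ M, ∀ ξ : H, Continuous fun g => σ g x ξ

namespace VNAction

variable {G : Type w} [Group G] [TopologicalSpace G] {M : Set (H →L[ℂ] H)}

/-- The action is outer: `σ_g` is not an inner automorphism `Ad(u)` for `g ≠ 1`. -/
def Outer (A : VNAction G M) : Prop :=
  ∀ g, g ≠ 1 → ¬ ∃ u, IsUnitaryIn M u ∧ ∀ x ∈ M, A.σ g x = u * x * star u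

/-- The fixed point algebra `M^G`. -/
def fixedPts (A : VNAction G M) : Set (H →L[ℂ] H) :=
  {x | x ∈ M ∧ ∀ g, A.σ g x = x}

/-- The action is faithful. -/
def Faithful (A : VNAction G M) : Prop :=
  ∀ g, g ≠ 1 → ∃ x ∈ M, A.σ g x ≠ x

/-- The action is minimal: faithful with `(M^G)′ ∩ M = ℂ`. -/
def Minimal (A : VNAction G M) : Prop :=
  A.Faithful ∧ TrivialS (commutantS A.fixedPts ∩ M)

end VNAction

/-- A concrete realization of the crossed product von Neumann algebra `P = M ⋊_σ G`:
a covariant pair `(π, uG)` on a Hilbert space `K` generating `P`, which is unitarily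
conjugate (via `W`) to the regular covariant representation on `L²(G, H; μ)`
(where `μ` is a Haar measure on `G`): `(π(x)f)(g) = σ_g⁻¹(x)(f(g))`,
`(u_h f)(g) = f(h⁻¹g)`. -/
structure CrossedProductRep (G : Type w) [Group G] [TopologicalSpace G] [MeasurableSpace G]
    (μ : Measure G)
    {H : Type u} [NormedAddCommGroup H] [InnerProductSpace ℂ H] [CompleteSpace H]
    (M : Set (H →L[ℂ] H)) (A : VNAction G M)
    (K : Type v) [NormedAddCommGroup K] [InnerProductSpace ℂ K] [CompleteSpace K] where
  π : (H →L[ℂ] H) → (K →L[ℂ] K)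
  uG : G → (K →L[ℂ] K)
  π_add : ∀ x ∈ M, ∀ y ∈ M, π (x + y) = π x + π y
  π_smul : ∀ (c : ℂ), ∀ x ∈ M, π (c • x) = c • π x
  π_mul : ∀ x ∈ M, ∀ y ∈ M, π (x * y) = π x * π y
  π_star : ∀ x ∈ M, π (star x) = star (π x)
  π_one : π 1 = 1
  π_inj : ∀ x ∈ M, π x = 0 → x = 0
  π_normal : IsNormalMapOn M π
  u_one : uG 1 = 1
  u_mul : ∀ g h, uG (g * h) = uG g * uG h
  u_unitary : ∀ g, star (uG g) * uG g = 1 ∧ uG g * star (uG g) = 1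
  u_cont : ∀ ξ : K, Continuous fun g => uG g ξ
  covariant : ∀ g, ∀ x ∈ M, uG g * π x * star (uG g) = π (A.σ g x)
  P : Set (K →L[ℂ] K)
  P_gen : P = genVN (π '' M ∪ Set.range uG)
  W : K ≃ₗᵢ[ℂ] Lp H 2 μ
  W_π : ∀ x ∈ M, ∀ f : K, ∀ᵐ g ∂μ, (W (π x f) : G → H) g = A.σ g⁻¹ x ((W f : G → H) g)
  W_u : ∀ h : G, ∀ f : K, ∀ᵐ g ∂μ, (W (uG h f) : G → H) g = (W f : G → H) (h⁻¹ * g)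

/-- A standard form for the von Neumann algebra `M ⊆ B(H)` in the sense of Haagerup:
an antiunitary involution `J` and a selfdual cone `P` satisfying
`JMJ = M′`, `JcJ = c*` for central `c`, `Jξ = ξ` on the cone, and `xJxJ`-stability
of the cone.  The standard form is unique up to a canonical unitary, so `H` plays the
role of the standard Hilbert space `L²(M)`, with bimodule actions
`x ξ y = x J y* J ξ`. -/
structure StandardForm (H : Type u) [NormedAddCommGroup H] [InnerProductSpace ℂ H]
    [CompleteSpace H] (M : Set (H →L[ℂ] H)) where
  J : H → H
  J_add : ∀ ξ η, J (ξ + η) = J ξ + J η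
  J_smul : ∀ (c : ℂ) ξ, J (c • ξ) = star c • J ξ
  J_invol : ∀ ξ, J (J ξ) = ξ
  J_norm : ∀ ξ, ‖J ξ‖ = ‖ξ‖
  Pcone : Set H
  selfdual : Pcone = {ξ | ∀ η ∈ Pcone, ∃ r : ℝ, 0 ≤ r ∧ (inner ℂ ξ η : ℂ) = r}
  J_fix : ∀ ξ ∈ Pcone, J ξ = ξ
  conj_mem : ∀ x ∈ M, ∃ x' ∈ commutantS M, ∀ ξ, J (x (J ξ)) = x' ξ
  conj_onto : ∀ y ∈ commutantS M, ∃ x ∈ M, ∀ ξ, J (x (J ξ)) = y ξ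
  center_conj : ∀ x ∈ M ∩ commutantS M, ∀ ξ, J (x (J ξ)) = star x ξ
  cone_stable : ∀ x ∈ M, ∀ ξ ∈ Pcone, x (J (x (J ξ))) ∈ Pcone

/-- The operator norm (as a supremum over the closed unit ball) of a bare function. -/
def opNormFun (f : H → H) : ℝ :=
  sSup ((fun ξ => ‖f ξ‖) '' Metric.closedBall (0 : H) 1)

/-- A standard representation of the (concrete) von Neumann algebra `S ⊆ B(K)`:
a faithful unital *-homomorphism `Φ` of `S` onto a von Neumann algebra on `L`
in standard form (such a *-isomorphism is automatically normal).  This realizes the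
standard Hilbert space `L²(S)` of `S` as `L`. -/
structure StandardRep {K : Type v} [NormedAddCommGroup K] [InnerProductSpace ℂ K]
    [CompleteSpace K] (S : Set (K →L[ℂ] K))
    (L : Type w) [NormedAddCommGroup L] [InnerProductSpace ℂ L] [CompleteSpace L] where
  Φ : (K →L[ℂ] K) → (L →L[ℂ] L)
  Φ_add : ∀ x ∈ S, ∀ y ∈ S, Φ (x + y) = Φ x + Φ y
  Φ_smul : ∀ (c : ℂ), ∀ x ∈ S, Φ (c • x) = c • Φ x
  Φ_mul : ∀ x ∈ S, ∀ y ∈ S, Φ (x * y) = Φ x * Φ y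
  Φ_star : ∀ x ∈ S, Φ (star x) = star (Φ x)
  Φ_one : Φ 1 = 1
  Φ_inj : ∀ x ∈ S, Φ x = 0 → x = 0
  image_vn : genVN (Φ '' S) = Φ '' S
  sf : StandardForm L (Φ '' S)

/-- The basic construction `⟨M, N⟩` associated to an inclusion `N ⊆ M` with `M`
in standard form on `H` with modular conjugation `J`: the commutant of `J N J`. -/
def basicCons (J : H → H) (N : Set (H →L[ℂ] H)) : Set (H →L[ℂ] H) :=
  {T : H →L[ℂ] H | ∀ p ∈ N, ∀ ξ, T (J (p (J ξ))) = J (p (J (T ξ)))}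

/-- An `M`-`M`-correspondence (binormal Hilbert bimodule) on the Hilbert space `K`:
a pair of commuting normal unital actions, `Lact` a *-homomorphism of `M` and
`Ract` a *-antihomomorphism of `M` (i.e. a homomorphism of `M^op`); together they
give the binormal representation `π(x ⊗ y^op) = Lact x * Ract y` of `M ⊙ M^op`. -/
structure Corr {H : Type u} [NormedAddCommGroup H] [InnerProductSpace ℂ H] [CompleteSpace H]
    (M : Set (H →L[ℂ] H))
    (K : Type v) [NormedAddCommGroup K] [InnerProductSpace ℂ K] [CompleteSpace K] where
  Lact : (H →L[ℂ] H) → (K →L[ℂ] K)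
  Ract : (H →L[ℂ] H) → (K →L[ℂ] K)
  L_add : ∀ x ∈ M, ∀ y ∈ M, Lact (x + y) = Lact x + Lact y
  L_smul : ∀ (c : ℂ), ∀ x ∈ M, Lact (c • x) = c • Lact x
  L_mul : ∀ x ∈ M, ∀ y ∈ M, Lact (x * y) = Lact x * Lact y
  L_star : ∀ x ∈ M, Lact (star x) = star (Lact x)
  L_one : Lact 1 = 1
  L_normal : IsNormalMapOn M Lact
  R_add : ∀ x ∈ M, ∀ y ∈ M, Ract (x + y) = Ract x + Ract y
  R_smul : ∀ (c : ℂ), ∀ x ∈ M, Ract (c • x) = c • Ract x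
  R_antimul : ∀ x ∈ M, ∀ y ∈ M, Ract (x * y) = Ract y * Ract x
  R_star : ∀ x ∈ M, Ract (star x) = star (Ract x)
  R_one : Ract 1 = 1
  R_normal : IsNormalMapOn M Ract
  commLR : ∀ x ∈ M, ∀ y ∈ M, Lact x * Ract y = Ract y * Lact x

/-- `S` is a multi-matrix algebra: *-isomorphic to an `ℓ^∞`-direct sum
`⊕_{i ∈ I} M_{n_i}(ℂ)` of finite-dimensional matrix algebras (matrices carrying the
operator norm; the direct sum consists of the norm-bounded families). -/
def IsMultiMatrix (S : Set (H →L[ℂ] H)) : Prop :=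
  ∃ (I : Type u) (n : I → ℕ), (∀ i, 1 ≤ n i) ∧
  ∃ f : (H →L[ℂ] H) → (∀ i, Matrix (Fin (n i)) (Fin (n i)) ℂ),
    (∀ x ∈ S, ∃ C : ℝ, ∀ i, ‖f x i‖ ≤ C) ∧
    (∀ x ∈ S, ∀ y ∈ S, f (x + y) = f x + f y) ∧
    (∀ (c : ℂ), ∀ x ∈ S, f (c • x) = c • f x) ∧
    (∀ x ∈ S, ∀ y ∈ S, f (x * y) = f x * f y) ∧
    (∀ x ∈ S, f (star x) = star (f x)) ∧
    (∀ x ∈ S, ∀ y ∈ S, f x = f y → x = y) ∧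
    (∀ g : (∀ i, Matrix (Fin (n i)) (Fin (n i)) ℂ),
      (∃ C : ℝ, ∀ i, ‖g i‖ ≤ C) → ∃ x ∈ S, f x = g)

end ActionsAndForms

/- ## Auxiliary machinery for the proof -/

section AuxNFG

variable {H : Type u} [NormedAddCommGroup H] [InnerProductSpace ℂ H] [CompleteSpace H]

local notation "⟪" x ", " y "⟫" => @inner ℂ _ _ x y

namespace StandardForm

variable {S : Set (H →L[ℂ] H)} (SF : StandardForm H S)

theorem J_zero : SF.J 0 = 0 := by
  have h := SF.J_smul 0 0
  simpa using h

theorem J_inj {ξ η : H} (h : SF.J ξ = SF.J η) : ξ = η := by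
  rw [← SF.J_invol ξ, h, SF.J_invol]

theorem J_neg (ξ : H) : SF.J (-ξ) = - SF.J ξ := by
  have h := SF.J_smul (-1) ξ
  simpa using h

theorem J_sub (ξ η : H) : SF.J (ξ - η) = SF.J ξ - SF.J η := by
  rw [sub_eq_add_neg, SF.J_add, SF.J_neg, sub_eq_add_neg]

theorem inner_J (ξ η : H) : ⟪SF.J ξ, SF.J η⟫ = ⟪η, ξ⟫ := by
  have hI : (RCLike.I : ℂ) = Complex.I := rfl
  have h1 : SF.J ξ + SF.J η = SF.J (ξ + η) := (SF.J_add ξ η).symm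
  have h2 : SF.J ξ - SF.J η = SF.J (ξ - η) := (SF.J_sub ξ η).symm
  have h3 : SF.J ξ - Complex.I • SF.J η = SF.J (ξ + Complex.I • η) := by
    rw [SF.J_add, SF.J_smul]
    simp [Complex.star_def, Complex.conj_I, sub_eq_add_neg, neg_smul]
  have h4 : SF.J ξ + Complex.I • SF.J η = SF.J (ξ - Complex.I • η) := by
    rw [SF.J_sub, SF.J_smul]
    simp [Complex.star_def, Complex.conj_I, sub_eq_add_neg, neg_smul]
  have e1 : ‖η + ξ‖ = ‖ξ + η‖ := by rw [add_comm]
  have e2 : ‖η - ξ‖ = ‖ξ - η‖ := norm_sub_rev _ _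
  have e3 : ‖η - Complex.I • ξ‖ = ‖ξ + Complex.I • η‖ := by
    have : η - Complex.I • ξ = (-Complex.I) • (ξ + Complex.I • η) := by
      rw [smul_add, smul_smul]
      simp [neg_smul]
      abel
    rw [this, norm_smul]
    simp
  have e4 : ‖η + Complex.I • ξ‖ = ‖ξ - Complex.I • η‖ := by
    have : η + Complex.I • ξ = Complex.I • (ξ - Complex.I • η) := by
      rw [smul_sub, smul_smul]
      simp [Complex.I_mul_I]
      abel
    rw [this, norm_smul]
    simp
  rw [inner_eq_sum_norm_sq_div_four, inner_eq_sum_norm_sq_div_four, hI, h1, h2, h3, h4,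
    SF.J_norm, SF.J_norm, SF.J_norm, SF.J_norm, e1, e2, e3, e4]

theorem inner_J' (ξ η : H) : ⟪SF.J ξ, η⟫ = ⟪SF.J η, ξ⟫ := by
  conv_lhs => rw [← SF.J_invol η]
  rw [SF.inner_J]

end StandardForm

/-- The "right multiplication" operator `ξ ↦ J a J ξ`. -/
def Aop {S : Set (H →L[ℂ] H)} (SF : StandardForm H S) (a : H →L[ℂ] H) : H →L[ℂ] H :=
  LinearMap.mkContinuous
    { toFun := fun ξ => SF.J (a (SF.J ξ))
      map_add' := fun ξ η => by
        show SF.J (a (SF.J (ξ + η))) = SF.J (a (SF.J ξ)) + SF.J (a (SF.J η))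
        rw [SF.J_add, map_add, SF.J_add]
      map_smul' := fun c ξ => by
        show SF.J (a (SF.J (c • ξ))) = c • SF.J (a (SF.J ξ))
        rw [SF.J_smul, a.map_smul, SF.J_smul, star_star] }
    ‖a‖ (fun ξ => by
      show ‖SF.J (a (SF.J ξ))‖ ≤ ‖a‖ * ‖ξ‖
      rw [SF.J_norm]
      calc ‖a (SF.J ξ)‖ ≤ ‖a‖ * ‖SF.J ξ‖ := a.le_opNorm _
        _ = ‖a‖ * ‖ξ‖ := by rw [SF.J_norm])

variable {S : Set (H →L[ℂ] H)} (SF : StandardForm H S)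

@[simp] theorem Aop_apply (a : H →L[ℂ] H) (ξ : H) : Aop SF a ξ = SF.J (a (SF.J ξ)) := rfl

theorem Aop_norm_le (a : H →L[ℂ] H) : ‖Aop SF a‖ ≤ ‖a‖ :=
  LinearMap.mkContinuous_norm_le _ (norm_nonneg a) _

theorem Aop_mul (a b : H →L[ℂ] H) : Aop SF (a * b) = Aop SF a * Aop SF b := by
  ext ξ
  simp [SF.J_invol]

theorem Aop_one : Aop SF (1 : H →L[ℂ] H) = 1 := by
  ext ξ
  simp [SF.J_invol]

theorem Aop_add (a b : H →L[ℂ] H) : Aop SF (a + b) = Aop SF a + Aop SF b := by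
  ext ξ
  simp [SF.J_add]

theorem Aop_smul (c : ℂ) (a : H →L[ℂ] H) : Aop SF (c • a) = star c • Aop SF a := by
  ext ξ
  simp [SF.J_smul]

theorem Aop_star (a : H →L[ℂ] H) : star (Aop SF a) = Aop SF (star a) := by
  rw [ContinuousLinearMap.star_eq_adjoint]
  symm
  rw [ContinuousLinearMap.eq_adjoint_iff]
  intro x y
  calc ⟪Aop SF (star a) x, y⟫ = ⟪SF.J ((star a) (SF.J x)), SF.J (SF.J y)⟫ := by
        rw [SF.J_invol]; rfl
    _ = ⟪SF.J y, (star a) (SF.J x)⟫ := SF.inner_J _ _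
    _ = ⟪a (SF.J y), SF.J x⟫ := by
        rw [ContinuousLinearMap.star_eq_adjoint, ContinuousLinearMap.adjoint_inner_right]
    _ = ⟪SF.J (SF.J (a (SF.J y))), SF.J x⟫ := by rw [SF.J_invol]
    _ = ⟪x, SF.J (a (SF.J y))⟫ := SF.inner_J _ _
    _ = ⟪x, Aop SF a y⟫ := rfl

theorem Aop_inj {a b : H →L[ℂ] H} (h : Aop SF a = Aop SF b) : a = b := by
  ext ζ
  have h2 : Aop SF a (SF.J ζ) = Aop SF b (SF.J ζ) := by rw [h]
  rw [Aop_apply, Aop_apply, SF.J_invol] at h2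
  exact SF.J_inj h2

theorem Aop_mem_commutant {z : H →L[ℂ] H} (hz : z ∈ S) : Aop SF z ∈ commutantS S := by
  obtain ⟨x', hx', hfor⟩ := SF.conj_mem z hz
  have : Aop SF z = x' := ContinuousLinearMap.ext fun ξ => hfor ξ
  rwa [this]

theorem Aop_onto {w : H →L[ℂ] H} (hw : w ∈ commutantS S) : ∃ z ∈ S, Aop SF z = w := by
  obtain ⟨z, hz, hfor⟩ := SF.conj_onto w hw
  exact ⟨z, hz, ContinuousLinearMap.ext fun ξ => hfor ξ⟩

theorem norm_le_one_of_isometric {u : H →L[ℂ] H} (hu : star u * u = 1) : ‖u‖ ≤ 1 := by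
  refine ContinuousLinearMap.opNorm_le_bound _ zero_le_one (fun ξ => ?_)
  have hadj : (ContinuousLinearMap.adjoint u) (u ξ) = ξ := by
    rw [← ContinuousLinearMap.star_eq_adjoint, ← ContinuousLinearMap.mul_apply, hu,
      ContinuousLinearMap.one_apply]
  have h : ⟪u ξ, u ξ⟫ = ⟪ξ, ξ⟫ := by
    rw [← ContinuousLinearMap.adjoint_inner_left u ξ (u ξ), hadj]
  rw [inner_self_eq_norm_sq_to_K, inner_self_eq_norm_sq_to_K] at h
  have h3 : (‖u ξ‖ : ℝ)^2 = (‖ξ‖ : ℝ)^2 := by exact_mod_cast h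
  nlinarith [norm_nonneg (u ξ), norm_nonneg ξ]

theorem commutantS_eq_centralizer (T : Set (H →L[ℂ] H)) :
    commutantS T = Set.centralizer T := by
  ext x
  constructor
  · intro h y hy
    exact (h y hy).symm
  · intro h y hy
    exact (h y hy).symm


theorem wot_coord (p q : H) :
    @Continuous (H →L[ℂ] H) ℂ (wot H) _ (fun a => ⟪p, a q⟫) := by
  letI : TopologicalSpace (H →L[ℂ] H) := wot H
  have h1 : Continuous (fun (a : H →L[ℂ] H) => fun r : H × H => (inner ℂ r.1 (a r.2) : ℂ)) :=
    continuous_induced_dom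
  exact (continuous_apply (p, q)).comp h1

theorem isNormal_coord (T : Set (H →L[ℂ] H)) (p q : H) :
    IsNormalFunctionalOn T (fun a => ⟪p, a q⟫) := by
  refine ⟨fun x _ y _ => ?_, fun c x _ => ?_, fun r => ?_⟩
  · simp [inner_add_right]
  · simp [inner_smul_right]
  · exact @Continuous.continuousOn _ _ (wot H) _ _ _ (wot_coord p q)

theorem wot_continuousOn_of_coord {f : (H →L[ℂ] H) → (H →L[ℂ] H)} {s : Set (H →L[ℂ] H)}
    (h : ∀ p q : H, @ContinuousOn _ _ (wot H) _ (fun a => ⟪p, f a q⟫) s) :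
    @ContinuousOn _ _ (wot H) (wot H) f s := by
  letI : TopologicalSpace (H →L[ℂ] H) := wot H
  rw [continuousOn_iff_continuous_restrict]
  apply continuous_induced_rng.mpr
  apply continuous_pi_iff.mpr
  intro pq
  have h2 := h pq.1 pq.2
  rw [continuousOn_iff_continuous_restrict] at h2
  exact h2

theorem opNorm_le_of_inner_le (T : H →L[ℂ] H) (C : ℝ) (hC : 0 ≤ C)
    (h : ∀ ξ η : H, ‖ξ‖ ≤ 1 → ‖η‖ ≤ 1 → ‖⟪η, T ξ⟫‖ ≤ C) : ‖T‖ ≤ C := by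
  refine ContinuousLinearMap.opNorm_le_bound _ hC (fun ξ => ?_)
  have key : ∀ z : H, ‖z‖ ≤ 1 → ‖T z‖ ≤ C := by
    intro z hz
    rcases eq_or_ne (T z) 0 with h0 | h0
    · rw [h0, norm_zero]; exact hC
    have hTz : 0 < ‖T z‖ := norm_pos_iff.mpr h0
    have hcoe : ((‖T z‖ : ℂ)) ≠ 0 := by exact_mod_cast hTz.ne'
    have hη : ‖((‖T z‖ : ℂ))⁻¹ • T z‖ ≤ 1 := by
      rw [norm_smul, norm_inv]
      have : ‖((‖T z‖ : ℝ) : ℂ)‖ = ‖T z‖ := by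
        rw [Complex.norm_real, norm_norm]
      rw [this, inv_mul_cancel₀ hTz.ne']
    have hinner : ⟪((‖T z‖ : ℂ))⁻¹ • T z, T z⟫ = ((‖T z‖ : ℝ) : ℂ) := by
      rw [inner_smul_left, inner_self_eq_norm_sq_to_K]
      rw [map_inv₀, Complex.conj_ofReal]
      field_simp
      rfl
    have h2 := h z (((‖T z‖ : ℂ))⁻¹ • T z) hz hη
    rw [hinner] at h2
    rw [Complex.norm_real, norm_norm] at h2
    exact h2
  rcases eq_or_ne ξ 0 with rfl | hξ
  · simp
  have hξn : 0 < ‖ξ‖ := norm_pos_iff.mpr hξ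
  have h3 := key (((‖ξ‖ : ℂ))⁻¹ • ξ) (by
    rw [norm_smul, norm_inv, Complex.norm_real, norm_norm, inv_mul_cancel₀ hξn.ne'])
  rw [T.map_smul, norm_smul, norm_inv, Complex.norm_real, norm_norm] at h3
  rw [inv_mul_le_iff₀ hξn] at h3
  linarith [h3]

variable {M : VonNeumannAlgebra H}

theorem memM_coe {a : H →L[ℂ] H} (ha : a ∈ M) : a ∈ (M : Set (H →L[ℂ] H)) := ha

theorem smul_memM {a : H →L[ℂ] H} (ha : a ∈ (M : Set (H →L[ℂ] H))) (c : ℂ) :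
    c • a ∈ (M : Set (H →L[ℂ] H)) := by
  have h1 : c • a = (c • (1 : H →L[ℂ] H)) * a := by rw [smul_mul_assoc, one_mul]
  have h2 : c • (1 : H →L[ℂ] H) ∈ M := by
    have := M.toStarSubalgebra.algebraMap_mem c
    rwa [Algebra.algebraMap_eq_smul_one] at this
  rw [h1]
  exact mul_mem h2 ha

theorem theta_one {θ : (H →L[ℂ] H) → (H →L[ℂ] H)}
    (hauto : IsAutoOn (M : Set (H →L[ℂ] H)) θ) : θ 1 = 1 := by
  obtain ⟨hmem, hsurj, hinj, hadd, hsmul, hmul, hstar⟩ := hauto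
  obtain ⟨e, heM, he⟩ := hsurj 1 (one_mem M)
  have h1 : θ 1 * θ e = θ e := by
    rw [← hmul 1 (one_mem M) e heM, one_mul]
  rw [he, mul_one] at h1
  exact h1

theorem pairing (SF : StandardForm H (M : Set (H →L[ℂ] H)))
    (n : ℕ) (x z : Fin n → H →L[ℂ] H) (ξ η : H) :
    ⟪η, (∑ i, x i * Aop SF (star (z i))) ξ⟫
      = ∑ i, ⟪η, (x i) (SF.J (star (z i) (SF.J ξ)))⟫ := by
  rw [ContinuousLinearMap.sum_apply, inner_sum]
  simp only [ContinuousLinearMap.mul_apply, Aop_apply]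

theorem conj_sum (SF : StandardForm H (M : Set (H →L[ℂ] H)))
    {v : H →L[ℂ] H} (hv : v ∈ (M : Set (H →L[ℂ] H)))
    (n : ℕ) (x z : Fin n → H →L[ℂ] H) (hx : ∀ i, x i ∈ (M : Set (H →L[ℂ] H))) :
    ∑ i, x i * Aop SF (star (v * z i * star v))
      = Aop SF v * (∑ i, x i * Aop SF (star (z i))) * Aop SF (star v) := by
  have hcomm : ∀ i, x i * Aop SF v = Aop SF v * x i := fun i =>
    (Aop_mem_commutant SF hv (x i) (hx i)).symm
  calc ∑ i, x i * Aop SF (star (v * z i * star v))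
      = ∑ i, Aop SF v * (x i * Aop SF (star (z i))) * Aop SF (star v) := by
        refine Finset.sum_congr rfl (fun i _ => ?_)
        have hst : star (v * z i * star v) = v * (star (z i) * star v) := by
          simp [star_mul, mul_assoc]
        rw [hst, Aop_mul, Aop_mul]
        simp only [← mul_assoc]
        rw [hcomm i]
    _ = Aop SF v * (∑ i, x i * Aop SF (star (z i))) * Aop SF (star v) := by
        rw [Finset.mul_sum, Finset.sum_mul]


section MainEstimates

variable (SF : StandardForm H (M : Set (H →L[ℂ] H)))
variable {θ : (H →L[ℂ] H) → (H →L[ℂ] H)}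

theorem mulDivAux {D ε : ℝ} (hD : 0 ≤ D) (hε : 0 < ε) : D * (ε / (D + 1)) ≤ ε := by
  have hD1 : (0:ℝ) < D + 1 := by linarith
  have h0 : (0:ℝ) ≤ ε / (D + 1) := le_of_lt (div_pos hε hD1)
  calc D * (ε / (D + 1)) ≤ (D + 1) * (ε / (D + 1)) := by nlinarith
    _ = ε := by field_simp

theorem psi_eq (n : ℕ) (x : Fin n → H →L[ℂ] H) (ξ η : H) (i : Fin n) :
    (fun a : H →L[ℂ] H => ⟪η, x i (SF.J ((star a) (SF.J ξ)))⟫)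
      = fun a : H →L[ℂ] H =>
        ⟪SF.J ξ, a (SF.J ((ContinuousLinearMap.adjoint (x i)) η))⟫ := by
  funext a
  calc ⟪η, x i (SF.J ((star a) (SF.J ξ)))⟫
      = ⟪(ContinuousLinearMap.adjoint (x i)) η, SF.J ((star a) (SF.J ξ))⟫ :=
        (ContinuousLinearMap.adjoint_inner_left (x i) _ _).symm
    _ = ⟪SF.J (SF.J ((ContinuousLinearMap.adjoint (x i)) η)), SF.J ((star a) (SF.J ξ))⟫ := by
        rw [SF.J_invol]
    _ = ⟪(star a) (SF.J ξ), SF.J ((ContinuousLinearMap.adjoint (x i)) η)⟫ := SF.inner_J _ _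
    _ = ⟪SF.J ξ, a (SF.J ((ContinuousLinearMap.adjoint (x i)) η))⟫ := by
        rw [ContinuousLinearMap.star_eq_adjoint, ContinuousLinearMap.adjoint_inner_left]

theorem subA (hauto : IsAutoOn (M : Set (H →L[ℂ] H)) θ)
    (hcl : InUClosureInn (M : Set (H →L[ℂ] H)) θ)
    (n : ℕ) (x y : Fin n → H →L[ℂ] H)
    (hx : ∀ i, x i ∈ (M : Set (H →L[ℂ] H))) (hy : ∀ i, y i ∈ (M : Set (H →L[ℂ] H)))
    (ε : ℝ) (hε : 0 < ε) :
    ‖∑ i, x i * Aop SF (star (θ (y i)))‖ ≤ ‖∑ i, x i * Aop SF (star (y i))‖ + ε := by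
  obtain ⟨hmem, hsurj, hinj, hadd, hsmul, hmul, hstar⟩ := hauto
  set T₀ := ∑ i, x i * Aop SF (star (y i)) with hT₀
  refine opNorm_le_of_inner_le _ _ (by positivity) (fun ξ η hξ hη => ?_)
  set ψ : Fin n → (H →L[ℂ] H) → ℂ :=
    fun i a => ⟪η, x i (SF.J ((star a) (SF.J ξ)))⟫ with hψdef
  have hψeq : ∀ i, ψ i = fun a : H →L[ℂ] H =>
      ⟪SF.J ξ, a (SF.J ((ContinuousLinearMap.adjoint (x i)) η))⟫ := fun i => by
    rw [hψdef]; exact psi_eq SF n x ξ η i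
  have hψn : ∀ i, IsNormalFunctionalOn (M : Set (H →L[ℂ] H)) (ψ i) := fun i => by
    rw [hψeq i]; exact isNormal_coord _ _ _
  have hψs : ∀ (i : Fin n) (c : ℂ) (a : H →L[ℂ] H), ψ i (c • a) = c * ψ i a := by
    intro i c a
    rw [hψeq i]
    simp [inner_smul_right]
  set c : Fin n → ℝ := fun i => ‖y i‖ + 1 with hc
  have hcpos : ∀ i, 0 < c i := fun i => by positivity
  set D := ∑ i, c i with hD
  have hD0 : 0 ≤ D := Finset.sum_nonneg (fun i _ => (hcpos i).le)
  have hD1 : (0:ℝ) < D + 1 := by linarith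
  set ε' := ε / (D + 1) with hε'def
  have hε' : 0 < ε' := div_pos hε hD1
  obtain ⟨u, ⟨huM, hu1, hu2⟩, hu⟩ := hcl ε' hε' n ψ hψn
  have hkey : ∀ i, ‖ψ i (θ (y i)) - ψ i (u * y i * star u)‖ ≤ c i * ε' := by
    intro i
    set zi := ((c i : ℂ))⁻¹ • y i with hzi
    have hziM : zi ∈ (M : Set (H →L[ℂ] H)) := smul_memM (hy i) _
    have hcne : ((c i : ℝ) : ℂ) ≠ 0 := by exact_mod_cast (hcpos i).ne'
    have hzinorm : ‖zi‖ ≤ 1 := by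
      rw [hzi, norm_smul, norm_inv, Complex.norm_real, Real.norm_eq_abs,
        abs_of_pos (hcpos i)]
      have hyc : ‖y i‖ ≤ c i := by rw [hc]; simp
      calc (c i)⁻¹ * ‖y i‖ ≤ (c i)⁻¹ * c i :=
            mul_le_mul_of_nonneg_left hyc (inv_nonneg.mpr (hcpos i).le)
        _ = 1 := inv_mul_cancel₀ (hcpos i).ne'
    have hsplit : y i = (c i : ℂ) • zi := by
      rw [hzi, smul_smul, mul_inv_cancel₀ hcne, one_smul]
    have h1 : ψ i (θ (y i)) = (c i : ℂ) * ψ i (θ zi) := by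
      conv_lhs => rw [hsplit]
      rw [hsmul (c i : ℂ) zi hziM, hψs]
    have h2 : ψ i (u * y i * star u) = (c i : ℂ) * ψ i (u * zi * star u) := by
      conv_lhs => rw [hsplit]
      rw [mul_smul_comm, smul_mul_assoc, hψs]
    have h3 := hu i zi hziM hzinorm
    calc ‖ψ i (θ (y i)) - ψ i (u * y i * star u)‖
        = ‖((c i : ℝ) : ℂ)‖ * ‖ψ i (θ zi) - ψ i (u * zi * star u)‖ := by
          rw [h1, h2, ← mul_sub, norm_mul]
      _ ≤ c i * ε' := by
          rw [Complex.norm_real, Real.norm_eq_abs, abs_of_pos (hcpos i)]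
          exact mul_le_mul_of_nonneg_left h3 (hcpos i).le
  have hpair1 : ⟪η, (∑ i, x i * Aop SF (star (θ (y i)))) ξ⟫ = ∑ i, ψ i (θ (y i)) :=
    pairing SF n x (fun i => θ (y i)) ξ η
  have hconj := conj_sum SF huM n x y hx
  have hpair2 : ⟪η, (Aop SF u * T₀ * Aop SF (star u)) ξ⟫
      = ∑ i, ψ i (u * y i * star u) := by
    rw [hT₀, ← hconj]
    exact pairing SF n x (fun i => u * y i * star u) ξ η
  have hAu : ‖Aop SF u‖ ≤ 1 :=
    le_trans (Aop_norm_le SF u) (norm_le_one_of_isometric hu1)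
  have hAsu : ‖Aop SF (star u)‖ ≤ 1 := by
    refine le_trans (Aop_norm_le SF (star u)) (norm_le_one_of_isometric ?_)
    rw [star_star]; exact hu2
  have hTnorm : ‖Aop SF u * T₀ * Aop SF (star u)‖ ≤ ‖T₀‖ := by
    calc ‖Aop SF u * T₀ * Aop SF (star u)‖
        ≤ ‖Aop SF u * T₀‖ * ‖Aop SF (star u)‖ := norm_mul_le _ _
      _ ≤ ‖Aop SF u‖ * ‖T₀‖ * ‖Aop SF (star u)‖ := by
          gcongr
          exact norm_mul_le _ _
      _ ≤ 1 * ‖T₀‖ * 1 := by gcongr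
      _ = ‖T₀‖ := by ring
  have hb : ‖⟪η, (Aop SF u * T₀ * Aop SF (star u)) ξ⟫‖ ≤ ‖T₀‖ := by
    calc ‖⟪η, (Aop SF u * T₀ * Aop SF (star u)) ξ⟫‖
        ≤ ‖η‖ * ‖(Aop SF u * T₀ * Aop SF (star u)) ξ‖ := norm_inner_le_norm _ _
      _ ≤ 1 * (‖T₀‖ * 1) := by
          refine mul_le_mul hη ?_ (norm_nonneg _) zero_le_one
          refine le_trans ((Aop SF u * T₀ * Aop SF (star u)).le_opNorm ξ) ?_
          exact mul_le_mul hTnorm hξ (norm_nonneg _) (norm_nonneg _)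
      _ = ‖T₀‖ := by ring
  calc ‖⟪η, (∑ i, x i * Aop SF (star (θ (y i)))) ξ⟫‖
      = ‖(∑ i, ψ i (u * y i * star u))
          + ∑ i, (ψ i (θ (y i)) - ψ i (u * y i * star u))‖ := by
        rw [hpair1, ← Finset.sum_add_distrib]
        congr 1
        exact Finset.sum_congr rfl (fun i _ => by ring)
    _ ≤ ‖∑ i, ψ i (u * y i * star u)‖
          + ‖∑ i, (ψ i (θ (y i)) - ψ i (u * y i * star u))‖ := norm_add_le _ _
    _ ≤ ‖T₀‖ + ∑ i, c i * ε' := by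
        refine add_le_add ?_ ?_
        · rw [← hpair2]; exact hb
        · exact le_trans (norm_sum_le _ _) (Finset.sum_le_sum (fun i _ => hkey i))
    _ ≤ ‖T₀‖ + ε := by
        have he1 : ∑ i, c i * ε' = D * ε' := by rw [hD, Finset.sum_mul]
        have he2 : D * ε' ≤ ε := by
          rw [hε'def]
          exact mulDivAux hD0 hε
        rw [he1]
        linarith


theorem subB (hauto : IsAutoOn (M : Set (H →L[ℂ] H)) θ)
    (hcl : InUClosureInn (M : Set (H →L[ℂ] H)) θ)
    (n : ℕ) (x y : Fin n → H →L[ℂ] H)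
    (hx : ∀ i, x i ∈ (M : Set (H →L[ℂ] H))) (hy : ∀ i, y i ∈ (M : Set (H →L[ℂ] H)))
    (ε : ℝ) (hε : 0 < ε) :
    ‖∑ i, x i * Aop SF (star (y i))‖ ≤ ‖∑ i, x i * Aop SF (star (θ (y i)))‖ + ε := by
  have hθ1 : θ 1 = 1 := theta_one hauto
  obtain ⟨hmem, hsurj, hinj, hadd, hsmul, hmul, hstar⟩ := hauto
  set T := ∑ i, x i * Aop SF (star (θ (y i))) with hT
  refine opNorm_le_of_inner_le _ _ (by positivity) (fun ξ η hξ hη => ?_)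
  set ψ : Fin n → (H →L[ℂ] H) → ℂ :=
    fun i a => ⟪η, x i (SF.J ((star a) (SF.J ξ)))⟫ with hψdef
  have hψeq : ∀ i, ψ i = fun a : H →L[ℂ] H =>
      ⟪SF.J ξ, a (SF.J ((ContinuousLinearMap.adjoint (x i)) η))⟫ := fun i => by
    rw [hψdef]; exact psi_eq SF n x ξ η i
  have hψn : ∀ i, IsNormalFunctionalOn (M : Set (H →L[ℂ] H)) (ψ i) := fun i => by
    rw [hψeq i]; exact isNormal_coord _ _ _
  have hψs : ∀ (i : Fin n) (c : ℂ) (a : H →L[ℂ] H), ψ i (c • a) = c * ψ i a := by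
    intro i c a
    rw [hψeq i]
    simp [inner_smul_right]
  set c : Fin n → ℝ := fun i => ‖y i‖ + 1 with hc
  have hcpos : ∀ i, 0 < c i := fun i => by positivity
  set D := ∑ i, c i with hD
  have hD0 : 0 ≤ D := Finset.sum_nonneg (fun i _ => (hcpos i).le)
  have hD1 : (0:ℝ) < D + 1 := by linarith
  set ε' := ε / (D + 1) with hε'def
  have hε' : 0 < ε' := div_pos hε hD1
  obtain ⟨u, ⟨huM, hu1, hu2⟩, hu⟩ := hcl ε' hε' n ψ hψn
  have hsuM : star u ∈ (M : Set (H →L[ℂ] H)) := star_mem huM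
  have hunorm : ‖u‖ ≤ 1 := norm_le_one_of_isometric hu1
  have hsunorm : ‖star u‖ ≤ 1 := norm_le_one_of_isometric (by rw [star_star]; exact hu2)
  have hkey : ∀ i, ‖ψ i (y i) - ψ i (θ (star u * y i * u))‖ ≤ c i * ε' := by
    intro i
    set zi := ((c i : ℂ))⁻¹ • y i with hzi
    have hziM : zi ∈ (M : Set (H →L[ℂ] H)) := smul_memM (hy i) _
    have hcne : ((c i : ℝ) : ℂ) ≠ 0 := by exact_mod_cast (hcpos i).ne'
    have hzinorm : ‖zi‖ ≤ 1 := by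
      rw [hzi, norm_smul, norm_inv, Complex.norm_real, Real.norm_eq_abs,
        abs_of_pos (hcpos i)]
      have hyc : ‖y i‖ ≤ c i := by rw [hc]; simp
      calc (c i)⁻¹ * ‖y i‖ ≤ (c i)⁻¹ * c i :=
            mul_le_mul_of_nonneg_left hyc (inv_nonneg.mpr (hcpos i).le)
        _ = 1 := inv_mul_cancel₀ (hcpos i).ne'
    have hsplit : y i = (c i : ℂ) • zi := by
      rw [hzi, smul_smul, mul_inv_cancel₀ hcne, one_smul]
    have hwM : star u * zi * u ∈ (M : Set (H →L[ℂ] H)) :=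
      mul_mem (mul_mem hsuM hziM) huM
    have hwnorm : ‖star u * zi * u‖ ≤ 1 := by
      calc ‖star u * zi * u‖ ≤ ‖star u * zi‖ * ‖u‖ := norm_mul_le _ _
        _ ≤ ‖star u‖ * ‖zi‖ * ‖u‖ :=
            mul_le_mul_of_nonneg_right (norm_mul_le _ _) (norm_nonneg _)
        _ ≤ 1 * 1 * 1 := by
            refine mul_le_mul (mul_le_mul hsunorm hzinorm (norm_nonneg _) zero_le_one)
              hunorm (norm_nonneg _) (by norm_num)
        _ = 1 := by ring
    have h3 := hu i (star u * zi * u) hwM hwnorm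
    have hcollapse : u * (star u * zi * u) * star u = zi := by
      simp only [← mul_assoc]
      rw [hu2, one_mul, mul_assoc, hu2, mul_one]
    rw [hcollapse] at h3
    rw [norm_sub_rev] at h3
    have h1 : ψ i (y i) = (c i : ℂ) * ψ i zi := by
      conv_lhs => rw [hsplit]
      rw [hψs]
    have h2 : ψ i (θ (star u * y i * u)) = (c i : ℂ) * ψ i (θ (star u * zi * u)) := by
      conv_lhs => rw [hsplit]
      rw [mul_smul_comm, smul_mul_assoc, hsmul (c i : ℂ) _ hwM, hψs]
    calc ‖ψ i (y i) - ψ i (θ (star u * y i * u))‖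
        = ‖((c i : ℝ) : ℂ)‖ * ‖ψ i zi - ψ i (θ (star u * zi * u))‖ := by
          rw [h1, h2, ← mul_sub, norm_mul]
      _ ≤ c i * ε' := by
          rw [Complex.norm_real, Real.norm_eq_abs, abs_of_pos (hcpos i)]
          exact mul_le_mul_of_nonneg_left h3 (hcpos i).le
  have hpair1 : ⟪η, (∑ i, x i * Aop SF (star (y i))) ξ⟫ = ∑ i, ψ i (y i) :=
    pairing SF n x y ξ η
  -- the conjugating unitary on the twisted side
  set v := θ (star u) with hv
  have hvM : v ∈ (M : Set (H →L[ℂ] H)) := hmem _ hsuM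
  have hstv : star v = θ u := by
    rw [hv, ← hstar (star u) hsuM, star_star]
  have hv1 : star v * v = 1 := by
    rw [hstv, hv, ← hmul u huM _ hsuM, hu2, hθ1]
  have hv2 : v * star v = 1 := by
    rw [hstv, hv, ← hmul _ hsuM u huM, hu1, hθ1]
  have hti : ∀ i, v * θ (y i) * star v = θ (star u * y i * u) := by
    intro i
    rw [hstv, hv]
    rw [hmul _ (mul_mem hsuM (hy i)) u huM, hmul _ hsuM _ (hy i)]
  have hconj := conj_sum SF hvM n x (fun i => θ (y i)) hx
  have hpair2 : ⟪η, (Aop SF v * T * Aop SF (star v)) ξ⟫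
      = ∑ i, ψ i (θ (star u * y i * u)) := by
    rw [hT, ← hconj]
    calc ⟪η, (∑ i, x i * Aop SF (star (v * θ (y i) * star v))) ξ⟫
        = ∑ i, ψ i (v * θ (y i) * star v) :=
          pairing SF n x (fun i => v * θ (y i) * star v) ξ η
      _ = ∑ i, ψ i (θ (star u * y i * u)) :=
          Finset.sum_congr rfl (fun i _ => by rw [hti i])
  have hAv : ‖Aop SF v‖ ≤ 1 :=
    le_trans (Aop_norm_le SF v) (norm_le_one_of_isometric hv1)
  have hAsv : ‖Aop SF (star v)‖ ≤ 1 := by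
    refine le_trans (Aop_norm_le SF (star v)) (norm_le_one_of_isometric ?_)
    rw [star_star]; exact hv2
  have hTnorm : ‖Aop SF v * T * Aop SF (star v)‖ ≤ ‖T‖ := by
    calc ‖Aop SF v * T * Aop SF (star v)‖
        ≤ ‖Aop SF v * T‖ * ‖Aop SF (star v)‖ := norm_mul_le _ _
      _ ≤ ‖Aop SF v‖ * ‖T‖ * ‖Aop SF (star v)‖ := by
          gcongr
          exact norm_mul_le _ _
      _ ≤ 1 * ‖T‖ * 1 := by gcongr
      _ = ‖T‖ := by ring
  have hb : ‖⟪η, (Aop SF v * T * Aop SF (star v)) ξ⟫‖ ≤ ‖T‖ := by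
    calc ‖⟪η, (Aop SF v * T * Aop SF (star v)) ξ⟫‖
        ≤ ‖η‖ * ‖(Aop SF v * T * Aop SF (star v)) ξ‖ := norm_inner_le_norm _ _
      _ ≤ 1 * (‖T‖ * 1) := by
          refine mul_le_mul hη ?_ (norm_nonneg _) zero_le_one
          refine le_trans ((Aop SF v * T * Aop SF (star v)).le_opNorm ξ) ?_
          exact mul_le_mul hTnorm hξ (norm_nonneg _) (norm_nonneg _)
      _ = ‖T‖ := by ring
  calc ‖⟪η, (∑ i, x i * Aop SF (star (y i))) ξ⟫‖
      = ‖(∑ i, ψ i (θ (star u * y i * u)))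
          + ∑ i, (ψ i (y i) - ψ i (θ (star u * y i * u)))‖ := by
        rw [hpair1, ← Finset.sum_add_distrib]
        congr 1
        exact Finset.sum_congr rfl (fun i _ => by ring)
    _ ≤ ‖∑ i, ψ i (θ (star u * y i * u))‖
          + ‖∑ i, (ψ i (y i) - ψ i (θ (star u * y i * u)))‖ := norm_add_le _ _
    _ ≤ ‖T‖ + ∑ i, c i * ε' := by
        refine add_le_add ?_ ?_
        · rw [← hpair2]; exact hb
        · exact le_trans (norm_sum_le _ _) (Finset.sum_le_sum (fun i _ => hkey i))
    _ ≤ ‖T‖ + ε := by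
        have he1 : ∑ i, c i * ε' = D * ε' := by rw [hD, Finset.sum_mul]
        have he2 : D * ε' ≤ ε := by
          rw [hε'def]
          exact mulDivAux hD0 hε
        rw [he1]
        linarith

theorem normEq (hauto : IsAutoOn (M : Set (H →L[ℂ] H)) θ)
    (hcl : InUClosureInn (M : Set (H →L[ℂ] H)) θ)
    (n : ℕ) (x y : Fin n → H →L[ℂ] H)
    (hx : ∀ i, x i ∈ (M : Set (H →L[ℂ] H))) (hy : ∀ i, y i ∈ (M : Set (H →L[ℂ] H))) :
    ‖∑ i, x i * Aop SF (star (θ (y i)))‖ = ‖∑ i, x i * Aop SF (star (y i))‖ :=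
  le_antisymm
    (le_of_forall_pos_le_add (fun ε hε => subA SF hauto hcl n x y hx hy ε hε))
    (le_of_forall_pos_le_add (fun ε hε => subB SF hauto hcl n x y hx hy ε hε))

theorem opNormFun_clm (T : H →L[ℂ] H) : opNormFun (⇑T) = ‖T‖ := by
  unfold opNormFun
  exact T.sSup_unitClosedBall_eq_norm

theorem inner_of_contain (SF : StandardForm H (M : Set (H →L[ℂ] H)))
    {θ : (H →L[ℂ] H) → (H →L[ℂ] H)}
    (hauto : IsAutoOn (M : Set (H →L[ℂ] H)) θ)
    (hfactor : IsFactorS (M : Set (H →L[ℂ] H)))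
    (V : H →ₗᵢ[ℂ] H)
    (hV : ∀ x ∈ (M : Set (H →L[ℂ] H)), ∀ y ∈ (M : Set (H →L[ℂ] H)),
      ∀ ξ : H, V (x (SF.J (star y (SF.J ξ)))) = x (SF.J (star (θ y) (SF.J (V ξ))))) :
    InnerAuto (M : Set (H →L[ℂ] H)) θ := by
  have hθ1 : θ 1 = 1 := theta_one hauto
  obtain ⟨hmem, hsurj, hinj, hadd, hsmul, hmul, hstar⟩ := hauto
  set Vc := V.toContinuousLinearMap with hVc
  have hcommL : ∀ z ∈ (M : Set (H →L[ℂ] H)), Vc * z = z * Vc := by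
    intro z hz
    ext ξ
    have h := hV z hz 1 (one_mem M) ξ
    rw [star_one, ContinuousLinearMap.one_apply, SF.J_invol, hθ1, star_one,
      ContinuousLinearMap.one_apply, SF.J_invol] at h
    simp only [ContinuousLinearMap.mul_apply, hVc, LinearIsometry.coe_toContinuousLinearMap]
    exact h
  have hVA : ∀ z ∈ (M : Set (H →L[ℂ] H)),
      Vc * Aop SF (star z) = Aop SF (star (θ z)) * Vc := by
    intro z hz
    ext ξ
    have h := hV 1 (one_mem M) z hz ξ
    rw [ContinuousLinearMap.one_apply, ContinuousLinearMap.one_apply] at h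
    simp only [ContinuousLinearMap.mul_apply, Aop_apply, hVc,
      LinearIsometry.coe_toContinuousLinearMap]
    exact h
  have hVstarV : star Vc * Vc = 1 := by
    ext ξ
    refine ext_inner_left ℂ (fun w => ?_)
    rw [ContinuousLinearMap.mul_apply, ContinuousLinearMap.one_apply,
      ContinuousLinearMap.star_eq_adjoint, ContinuousLinearMap.adjoint_inner_right]
    simp only [hVc, LinearIsometry.coe_toContinuousLinearMap]
    exact V.inner_map_map w ξ
  have hcommLs : ∀ z ∈ (M : Set (H →L[ℂ] H)), star Vc * z = z * star Vc := by
    intro z hz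
    have h := congrArg star (hcommL (star z) (star_mem hz))
    rw [star_mul, star_mul, star_star] at h
    exact h.symm
  have hVAs : ∀ z ∈ (M : Set (H →L[ℂ] H)),
      star Vc * Aop SF (star (θ z)) = Aop SF (star z) * star Vc := by
    intro z hz
    have h := hVA (star z) (star_mem hz)
    rw [star_star, hstar z hz, star_star] at h
    have h2 := congrArg star h
    rw [star_mul, star_mul, Aop_star, Aop_star] at h2
    exact h2.symm
  set p := Vc * star Vc with hp
  have hpComm : ∀ z ∈ (M : Set (H →L[ℂ] H)), p * z = z * p := by
    intro z hz
    rw [hp, mul_assoc, hcommLs z hz, ← mul_assoc, hcommL z hz, mul_assoc]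
  have hpA : ∀ w ∈ commutantS (M : Set (H →L[ℂ] H)), w * p = p * w := by
    intro w hw
    obtain ⟨s, hsM, hAs⟩ := Aop_onto SF hw
    obtain ⟨t, htM, ht⟩ := hsurj (star s) (star_mem hsM)
    have hc : p * Aop SF (star (θ t)) = Aop SF (star (θ t)) * p := by
      rw [hp, mul_assoc, hVAs t htM, ← mul_assoc, hVA t htM, mul_assoc]
    have hss : Aop SF s = Aop SF (star (θ t)) := by rw [ht, star_star]
    rw [← hAs, hss]
    exact hc.symm
  have hpM : p ∈ (M : Set (H →L[ℂ] H)) := by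
    have h1 : p ∈ Set.centralizer (Set.centralizer (M : Set (H →L[ℂ] H))) :=
      Set.mem_centralizer_iff.mpr (fun w hw =>
        hpA w (by rw [commutantS_eq_centralizer]; exact hw))
    rwa [M.centralizer_centralizer] at h1
  have hpC : p ∈ commutantS (M : Set (H →L[ℂ] H)) := fun z hz => hpComm z hz
  obtain ⟨cc, hcc⟩ := hfactor p ⟨hpM, hpC⟩
  have hp1 : p = 1 := by
    have h1 : star Vc * p * Vc = 1 := by
      rw [hp]
      calc star Vc * (Vc * star Vc) * Vc = (star Vc * Vc) * (star Vc * Vc) := by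
            simp only [mul_assoc]
        _ = 1 := by rw [hVstarV, one_mul]
    have h2 : star Vc * p * Vc = cc • (1 : H →L[ℂ] H) := by
      rw [hcc, mul_smul_comm, smul_mul_assoc, mul_one, hVstarV]
    rw [h2] at h1
    rw [hcc, h1]
  have hVcC : Vc ∈ commutantS (M : Set (H →L[ℂ] H)) := fun z hz => hcommL z hz
  obtain ⟨w, hwM, hwA⟩ := Aop_onto SF hVcC
  have hw1 : star w * w = 1 := by
    apply Aop_inj SF
    rw [Aop_mul, ← Aop_star, hwA, Aop_one, hVstarV]
  have hw2 : w * star w = 1 := by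
    apply Aop_inj SF
    rw [Aop_mul, ← Aop_star, hwA, Aop_one, ← hp, hp1]
  have himpl : ∀ z ∈ (M : Set (H →L[ℂ] H)), θ z = w * z * star w := by
    intro z hz
    have h := hVA z hz
    rw [← hwA, ← Aop_mul, ← Aop_mul] at h
    have h2 := Aop_inj SF h
    have h3 := congrArg star h2
    rw [star_mul, star_mul, star_star, star_star] at h3
    have h4 := congrArg (fun t => w * t) h3
    rw [← mul_assoc, ← mul_assoc, hw2, one_mul] at h4
    exact h4.symm
  exact ⟨w, ⟨hwM, hw1, hw2⟩, himpl⟩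

theorem comp_theta_coord {θ : (H →L[ℂ] H) → (H →L[ℂ] H)}
    (hauto : IsAutoOn (M : Set (H →L[ℂ] H)) θ)
    (hcl : InUClosureInn (M : Set (H →L[ℂ] H)) θ) (p q : H) (r : ℝ) :
    @ContinuousOn _ _ (wot H) _ (fun a => ⟪p, θ a q⟫)
      {x | x ∈ (M : Set (H →L[ℂ] H)) ∧ ‖x‖ ≤ r} := by
  letI : TopologicalSpace (H →L[ℂ] H) := wot H
  obtain ⟨hmem, hsurj, hinj, hadd, hsmul, hmul, hstar⟩ := hauto
  set s := {x : H →L[ℂ] H | x ∈ (M : Set (H →L[ℂ] H)) ∧ ‖x‖ ≤ r} with hs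
  have hψn : IsNormalFunctionalOn (M : Set (H →L[ℂ] H))
      (fun b : H →L[ℂ] H => ⟪p, b q⟫) := isNormal_coord _ p q
  have hsel : ∀ k : ℕ, ∃ u : H →L[ℂ] H, IsUnitaryIn (M : Set (H →L[ℂ] H)) u ∧
      ∀ z ∈ (M : Set (H →L[ℂ] H)), ‖z‖ ≤ 1 →
        ‖⟪p, θ z q⟫ - ⟪p, (u * z * star u) q⟫‖ ≤ 1 / (k + 1 : ℝ) := by
    intro k
    obtain ⟨u, hu, h⟩ := hcl (1 / (k + 1 : ℝ)) (by positivity) 1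
      (fun _ => fun b : H →L[ℂ] H => ⟪p, b q⟫) (fun _ => hψn)
    exact ⟨u, hu, fun z hz hzn => h 0 z hz hzn⟩
  choose u huU hu using hsel
  have hC : (0:ℝ) < |r| + 1 := by positivity
  have hCc : ((|r| + 1 : ℝ) : ℂ) ≠ 0 := by exact_mod_cast hC.ne'
  have htu : TendstoUniformlyOn
      (fun k (a : H →L[ℂ] H) => ⟪p, (u k * a * star (u k)) q⟫)
      (fun a => ⟪p, θ a q⟫) atTop s := by
    rw [Metric.tendstoUniformlyOn_iff]
    intro ε hε
    have htend : Filter.Tendsto (fun k : ℕ => (|r| + 1) * (1 / (k + 1 : ℝ)))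
        atTop (nhds 0) := by
      have h0 := tendsto_one_div_add_atTop_nhds_zero_nat (𝕜 := ℝ)
      have h1 := h0.const_mul (|r| + 1)
      simpa using h1
    filter_upwards [htend.eventually_lt_const hε] with k hk
    intro a ha
    rw [dist_eq_norm]
    have haM : a ∈ (M : Set (H →L[ℂ] H)) := ha.1
    have han : ‖a‖ ≤ r := ha.2
    set b := (((|r| + 1 : ℝ) : ℂ))⁻¹ • a with hb
    have hbM : b ∈ (M : Set (H →L[ℂ] H)) := smul_memM haM _
    have hbn : ‖b‖ ≤ 1 := by
      rw [hb, norm_smul, norm_inv, Complex.norm_real, Real.norm_eq_abs, abs_of_pos hC]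
      have hle : ‖a‖ ≤ |r| + 1 := le_trans han (by
        have := le_abs_self r
        linarith)
      calc (|r| + 1)⁻¹ * ‖a‖ ≤ (|r| + 1)⁻¹ * (|r| + 1) :=
            mul_le_mul_of_nonneg_left hle (inv_nonneg.mpr hC.le)
        _ = 1 := inv_mul_cancel₀ hC.ne'
    have hsplit : a = ((|r| + 1 : ℝ) : ℂ) • b := by
      rw [hb, smul_smul, mul_inv_cancel₀ hCc, one_smul]
    have hkey := hu k b hbM hbn
    have h1 : ⟪p, θ a q⟫ = ((|r| + 1 : ℝ) : ℂ) * ⟪p, θ b q⟫ := by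
      conv_lhs => rw [hsplit]
      rw [hsmul _ b hbM]
      simp [inner_smul_right]
    have h2 : ⟪p, (u k * a * star (u k)) q⟫
        = ((|r| + 1 : ℝ) : ℂ) * ⟪p, (u k * b * star (u k)) q⟫ := by
      conv_lhs => rw [hsplit]
      rw [mul_smul_comm, smul_mul_assoc]
      simp [inner_smul_right]
    rw [h1, h2, ← mul_sub, norm_mul, Complex.norm_real, Real.norm_eq_abs, abs_of_pos hC]
    calc (|r| + 1) * ‖⟪p, θ b q⟫ - ⟪p, (u k * b * star (u k)) q⟫‖
        ≤ (|r| + 1) * (1 / (k + 1 : ℝ)) := mul_le_mul_of_nonneg_left hkey hC.le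
      _ < ε := hk
  refine htu.continuousOn (Filter.Frequently.of_forall (fun k => ?_))
  have hrw : (fun a : H →L[ℂ] H => ⟪p, (u k * a * star (u k)) q⟫)
      = fun a => ⟪(ContinuousLinearMap.adjoint (u k)) p, a ((star (u k)) q)⟫ := by
    funext a
    rw [ContinuousLinearMap.mul_apply, ContinuousLinearMap.mul_apply,
      ← ContinuousLinearMap.adjoint_inner_left (u k)]
  rw [hrw]
  exact (wot_coord _ _).continuousOn

theorem Ract_normal (SF : StandardForm H (M : Set (H →L[ℂ] H)))
    {θ : (H →L[ℂ] H) → (H →L[ℂ] H)}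
    (hauto : IsAutoOn (M : Set (H →L[ℂ] H)) θ)
    (hcl : InUClosureInn (M : Set (H →L[ℂ] H)) θ) :
    IsNormalMapOn (M : Set (H →L[ℂ] H)) (fun a => Aop SF (star (θ a))) := by
  intro r
  apply wot_continuousOn_of_coord
  intro p q
  have hco : (fun a : H →L[ℂ] H => ⟪p, (Aop SF (star (θ a))) q⟫)
      = fun a => ⟪SF.J q, θ a (SF.J p)⟫ := by
    funext a
    calc ⟪p, SF.J ((star (θ a)) (SF.J q))⟫
        = ⟪SF.J (SF.J p), SF.J ((star (θ a)) (SF.J q))⟫ := by rw [SF.J_invol]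
      _ = ⟪(star (θ a)) (SF.J q), SF.J p⟫ := SF.inner_J _ _
      _ = ⟪SF.J q, θ a (SF.J p)⟫ := by
          rw [ContinuousLinearMap.star_eq_adjoint, ContinuousLinearMap.adjoint_inner_left]
  show @ContinuousOn _ _ (wot H) _
    (fun a : H →L[ℂ] H => ⟪p, (Aop SF (star (θ a))) q⟫) _
  rw [hco]
  exact comp_theta_coord hauto hcl (SF.J q) (SF.J p) r

end MainEstimates

end AuxNFG
/- ## STATEMENT 14
Let `M` be a factor with separable predual (acting standardly on the separable Hilbert
space `H = L²(M)`).  If `M` is not full (i.e. `Inn(M)` is not closed in `Aut(M)`), then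
there exists `θ` in the closure of `Inn(M)` with `θ ∉ Inn(M)`, and the correspondence
`L²(θ)` (same Hilbert space `H` with right action twisted by `θ`) is weakly equivalent
to `L²(M)` but does not contain `L²(M)`.  In particular, if every `M`-`M`-correspondence
weakly equivalent to `L²(M)` contains `L²(M)`, then `M` is full. -/
theorem not_full_gives_twisted_correspondence
    {H : Type u} [NormedAddCommGroup H] [InnerProductSpace ℂ H] [CompleteSpace H]
    [TopologicalSpace.SeparableSpace H]
    (M : VonNeumannAlgebra H)
    (hfactor : IsFactorS (M : Set (H →L[ℂ] H)))
    (SF : StandardForm H (M : Set (H →L[ℂ] H))) :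
    -- main statement: if M is not full then some θ ∈ closure(Inn M) \ Inn M gives
    -- a correspondence L²(θ) weakly equivalent to L²(M) not containing it
    (¬ InnClosed (M : Set (H →L[ℂ] H)) →
      ∃ θ : (H →L[ℂ] H) → (H →L[ℂ] H),
        IsAutoOn (M : Set (H →L[ℂ] H)) θ ∧
        InUClosureInn (M : Set (H →L[ℂ] H)) θ ∧
        ¬ InnerAuto (M : Set (H →L[ℂ] H)) θ ∧
        -- L²(θ) is weakly equivalent to L²(M):
        (∀ (n : ℕ) (x y : Fin n → (H →L[ℂ] H)), (∀ i, x i ∈ M) → (∀ i, y i ∈ M) →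
          opNormFun (fun ξ : H => ∑ i, x i (SF.J (star (θ (y i)) (SF.J ξ)))) =
          opNormFun (fun ξ : H => ∑ i, x i (SF.J (star (y i) (SF.J ξ))))) ∧
        -- but L²(θ) does not contain L²(M):
        ¬ ∃ V : H →ₗᵢ[ℂ] H, ∀ x ∈ (M : Set (H →L[ℂ] H)), ∀ y ∈ (M : Set (H →L[ℂ] H)),
            ∀ ξ : H, V (x (SF.J (star y (SF.J ξ)))) = x (SF.J (star (θ y) (SF.J (V ξ))))) ∧
    -- in particular: if every correspondence weakly equivalent to L²(M) contains it,
    -- then M is full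
    ((∀ (K : Type u) [NormedAddCommGroup K] [InnerProductSpace ℂ K] [CompleteSpace K],
        ∀ C : Corr (M : Set (H →L[ℂ] H)) K,
        (∀ (n : ℕ) (x y : Fin n → (H →L[ℂ] H)), (∀ i, x i ∈ M) → (∀ i, y i ∈ M) →
          opNormFun (fun ξ : K => ∑ i, C.Lact (x i) (C.Ract (y i) ξ)) =
          opNormFun (fun ξ : H => ∑ i, x i (SF.J (star (y i) (SF.J ξ))))) →
        ∃ V : H →ₗᵢ[ℂ] K, ∀ x ∈ (M : Set (H →L[ℂ] H)), ∀ y ∈ (M : Set (H →L[ℂ] H)),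
          ∀ ξ : H, V (x (SF.J (star y (SF.J ξ)))) = C.Lact x (C.Ract y (V ξ))) →
      InnClosed (M : Set (H →L[ℂ] H))) := by
  
  classical
  have hmain : ¬ InnClosed (M : Set (H →L[ℂ] H)) →
      ∃ θ : (H →L[ℂ] H) → (H →L[ℂ] H),
        IsAutoOn (M : Set (H →L[ℂ] H)) θ ∧
        InUClosureInn (M : Set (H →L[ℂ] H)) θ ∧
        ¬ InnerAuto (M : Set (H →L[ℂ] H)) θ ∧
        (∀ (n : ℕ) (x y : Fin n → (H →L[ℂ] H)), (∀ i, x i ∈ M) → (∀ i, y i ∈ M) →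
          opNormFun (fun ξ : H => ∑ i, x i (SF.J (star (θ (y i)) (SF.J ξ)))) =
          opNormFun (fun ξ : H => ∑ i, x i (SF.J (star (y i) (SF.J ξ))))) ∧
        ¬ ∃ V : H →ₗᵢ[ℂ] H, ∀ x ∈ (M : Set (H →L[ℂ] H)), ∀ y ∈ (M : Set (H →L[ℂ] H)),
            ∀ ξ : H, V (x (SF.J (star y (SF.J ξ)))) =
              x (SF.J (star (θ y) (SF.J (V ξ)))) := by
    intro hnc
    unfold InnClosed at hnc
    push_neg at hnc
    obtain ⟨θ, hauto, hcl, hninner⟩ := hnc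
    refine ⟨θ, hauto, hcl, hninner, ?_, ?_⟩
    · intro n x y hx hy
      have h1 : (fun ξ : H => ∑ i, x i (SF.J (star (θ (y i)) (SF.J ξ)))) =
          ⇑(∑ i, x i * Aop SF (star (θ (y i)))) := by
        funext ξ
        simp [ContinuousLinearMap.sum_apply]
      have h2 : (fun ξ : H => ∑ i, x i (SF.J (star (y i) (SF.J ξ)))) =
          ⇑(∑ i, x i * Aop SF (star (y i))) := by
        funext ξ
        simp [ContinuousLinearMap.sum_apply]
      rw [h1, h2, opNormFun_clm, opNormFun_clm]
      exact normEq SF hauto hcl n x y hx hy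
    · rintro ⟨V, hV⟩
      exact hninner (inner_of_contain SF hauto hfactor V hV)
  refine ⟨hmain, ?_⟩
  intro hcontain
  by_contra hnc
  obtain ⟨θ, hauto, hcl, hninner, hweak, hnocont⟩ := hmain hnc
  have hmem := hauto.1
  have hadd := hauto.2.2.2.1
  have hsmul := hauto.2.2.2.2.1
  have hmul := hauto.2.2.2.2.2.1
  have hstar := hauto.2.2.2.2.2.2
  set C : Corr (M : Set (H →L[ℂ] H)) H :=
    { Lact := fun a => a
      Ract := fun a => Aop SF (star (θ a))
      L_add := fun x _ y _ => rfl
      L_smul := fun c x _ => rfl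
      L_mul := fun x _ y _ => rfl
      L_star := fun x _ => rfl
      L_one := rfl
      L_normal := fun r => @continuousOn_id _ (wot H) _
      R_add := fun x hx y hy => by
        show Aop SF (star (θ (x + y))) = Aop SF (star (θ x)) + Aop SF (star (θ y))
        rw [hadd x hx y hy, star_add, Aop_add]
      R_smul := fun c x hx => by
        show Aop SF (star (θ (c • x))) = c • Aop SF (star (θ x))
        rw [hsmul c x hx, star_smul, Aop_smul, star_star]
      R_antimul := fun x hx y hy => by
        show Aop SF (star (θ (x * y))) = Aop SF (star (θ y)) * Aop SF (star (θ x))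
        rw [hmul x hx y hy, star_mul, Aop_mul]
      R_star := fun x hx => by
        show Aop SF (star (θ (star x))) = star (Aop SF (star (θ x)))
        rw [hstar x hx, star_star, Aop_star, star_star]
      R_one := by
        show Aop SF (star (θ 1)) = 1
        rw [theta_one hauto, star_one, Aop_one]
      R_normal := Ract_normal SF hauto hcl
      commLR := fun x hx y hy =>
        (Aop_mem_commutant SF (star_mem (hmem y hy)) x hx).symm } with hC
  obtain ⟨V, hV⟩ := hcontain H C (fun n x y hx hy => hweak n x y hx hy)
  exact hnocont ⟨V, fun x hx y hy ξ => hV x hx y hy ξ⟩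
end
end

section
/- Let C be a convex cone in a real vector space V, let p : V → ℝ be a sublinear function, and let q : C → ℝ be a superlinear function (i.e. −q is sublinear on C). If q(x) ≤ p(x) for all x ∈ C, then there exists a linear functional ψ : V → ℝ such that ψ(x) ≤ p(x) for all x ∈ V and q(x) ≤ ψ(x) for all x ∈ C. -/
open Pointwise

/- ## STATEMENT 18
Let `C` be a convex cone in a real vector space `V`, let `p : V → ℝ` be a sublinear
function, and let `q : C → ℝ` be a superlinear function.  If `q ≤ p` on `C`, then there
exists a linear functional `ψ : V → ℝ` with `ψ ≤ p` on `V` and `q ≤ ψ` on `C`. -/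
theorem hahn_banach_cone
    {V : Type*} [AddCommGroup V] [Module ℝ V]
    (C : Set V)
    (hC0 : (0 : V) ∈ C)
    (hCadd : ∀ x ∈ C, ∀ y ∈ C, x + y ∈ C)
    (hCsmul : ∀ (a : ℝ), 0 ≤ a → ∀ x ∈ C, a • x ∈ C)
    (p : V → ℝ)
    (hp_add : ∀ x y : V, p (x + y) ≤ p x + p y)
    (hp_smul : ∀ (a : ℝ), 0 ≤ a → ∀ x : V, p (a • x) = a * p x)
    (q : V → ℝ)
    (hq_add : ∀ x ∈ C, ∀ y ∈ C, q x + q y ≤ q (x + y))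
    (hq_smul : ∀ (a : ℝ), 0 ≤ a → ∀ x ∈ C, q (a • x) = a * q x)
    (hqp : ∀ x ∈ C, q x ≤ p x) :
    ∃ ψ : V →ₗ[ℝ] ℝ, (∀ x : V, ψ x ≤ p x) ∧ ∀ x ∈ C, q x ≤ ψ x := by
  classical
  have hp0 : p 0 = 0 := by simpa using hp_smul 0 le_rfl 0
  have hq0 : q 0 = 0 := by simpa using hq_smul 0 le_rfl 0 hC0
  let S : V → Set ℝ := fun x => (fun c => p (x + c) - q c) '' C
  have hSne : ∀ x, (S x).Nonempty := fun x => ⟨p x, 0, hC0, by simp [hq0]⟩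
  have hSbdd : ∀ x, ∀ a ∈ S x, -p (-x) ≤ a := by
    rintro x a ⟨c, hc, rfl⟩
    dsimp only
    have h1 : p c ≤ p (x + c) + p (-x) := by
      have := hp_add (x + c) (-x); simpa [add_comm, add_assoc, add_left_comm] using this
    have h2 := hqp c hc
    linarith
  have hSbdd' : ∀ x, BddBelow (S x) := fun x => ⟨-p (-x), hSbdd x⟩
  have hr_mem : ∀ x, ∀ c ∈ C, sInf (S x) ≤ p (x + c) - q c := fun x c hc =>
    csInf_le (hSbdd' x) ⟨c, hc, rfl⟩
  have hr_le_p : ∀ x, sInf (S x) ≤ p x := fun x => by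
    have := hr_mem x 0 hC0; simpa [hq0] using this
  -- subadditivity
  have r_add : ∀ x y, sInf (S (x + y)) ≤ sInf (S x) + sInf (S y) := by
    intro x y
    rw [← sub_le_iff_le_add']
    apply le_csInf (hSne y)
    rintro b ⟨d, hd, rfl⟩
    dsimp only
    rw [sub_le_iff_le_add, ← sub_le_iff_le_add']
    apply le_csInf (hSne x)
    rintro a ⟨c, hc, rfl⟩
    dsimp only
    rw [sub_le_iff_le_add]
    have hmem := hr_mem (x + y) (c + d) (hCadd c hc d hd)
    have hpadd : p (x + y + (c + d)) ≤ p (x + c) + p (y + d) := by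
      have := hp_add (x + c) (y + d)
      simpa [add_comm, add_assoc, add_left_comm] using this
    have hqcd := hq_add c hc d hd
    linarith
  -- positive homogeneity
  have r_hom : ∀ a : ℝ, 0 < a → ∀ x, sInf (S (a • x)) = a * sInf (S x) := by
    intro a ha x
    have hset : S (a • x) = a • S x := by
      ext b
      constructor
      · rintro ⟨c, hc, rfl⟩
        refine ⟨p (x + a⁻¹ • c) - q (a⁻¹ • c), ⟨a⁻¹ • c, hCsmul a⁻¹ (by positivity) c hc, rfl⟩, ?_⟩
        have h1 : a • (x + a⁻¹ • c) = a • x + c := by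
          rw [smul_add, smul_smul, mul_inv_cancel₀ ha.ne', one_smul]
        have h2 : p (a • x + c) = a * p (x + a⁻¹ • c) := by
          rw [← h1, hp_smul a ha.le]
        have h3 : q c = a * q (a⁻¹ • c) := by
          rw [← hq_smul a ha.le _ (hCsmul a⁻¹ (by positivity) c hc), smul_smul,
            mul_inv_cancel₀ ha.ne', one_smul]
        simp only [smul_eq_mul]
        rw [h2, h3]; ring
      · rintro ⟨b, ⟨c, hc, rfl⟩, rfl⟩
        refine ⟨a • c, hCsmul a ha.le c hc, ?_⟩
        dsimp only
        rw [← smul_add, hp_smul a ha.le, hq_smul a ha.le c hc]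
        simp only [smul_eq_mul]; ring
    rw [hset, ← smul_eq_mul, Real.sInf_smul_of_nonneg ha.le]
  have hr0 : sInf (S 0) = 0 := by
    refine le_antisymm (by simpa [hp0] using hr_le_p 0) ?_
    apply le_csInf (hSne 0)
    rintro a ⟨c, hc, rfl⟩
    dsimp only
    have := hqp c hc; simp only [zero_add]; linarith
  -- build partial linear map on span {0}
  let f : V →ₗ.[ℝ] ℝ := LinearPMap.mkSpanSingleton' (0 : V) (0 : ℝ) (fun c _ => by simp)
  have hfdom : ∀ x : f.domain, (x : V) = 0 := by
    rintro ⟨x, hx⟩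
    obtain ⟨c, hc⟩ := Submodule.mem_span_singleton.mp hx
    simp [← hc]
  have hfle : ∀ x : f.domain, f x ≤ sInf (S (x : V)) := by
    intro x
    have hx0 : x = 0 := Subtype.ext (by simpa using hfdom x)
    rw [hx0]
    simp [hfdom, hr0]
  obtain ⟨g, -, hgle⟩ :=
    exists_extension_of_le_sublinear f (fun x => sInf (S x)) r_hom r_add hfle
  refine ⟨g, fun x => (hgle x).trans (hr_le_p x), fun c hc => ?_⟩
  have h1 : g (-c) ≤ sInf (S (-c)) := hgle (-c)
  have h2 : sInf (S (-c)) ≤ p (-c + c) - q c := hr_mem (-c) c hc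
  have h3 : g (-c) = -g c := by simp
  simp only [neg_add_cancel, hp0] at h2
  linarith [h3 ▸ h1.trans h2]
end

section
/- Let C be a convex cone (containing 0) in a real vector space V, p : V → ℝ sublinear, and q : C → ℝ superlinear with q ≤ p on C. Then the function r : V → ℝ defined by r(x) = inf{ p(x+y) − q(y) : y ∈ C } is a well-defined (real-valued) sublinear function on V satisfying −p(−x) ≤ r(x) ≤ p(x) for every x ∈ V. -/
open Pointwise


/-- The infimal function `r(x) = inf { p(x + y) - q(y) : y ∈ C }`. -/
noncomputable def infConvFun {V : Type*} [AddCommGroup V] [Module ℝ V]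
    (C : Set V) (p q : V → ℝ) (x : V) : ℝ :=
  sInf {t : ℝ | ∃ y ∈ C, t = p (x + y) - q y}

/- ## STATEMENT 19
Let `C` be a convex cone (containing `0`) in a real vector space `V`, `p : V → ℝ`
sublinear, and `q : C → ℝ` superlinear with `q ≤ p` on `C`.  Then
`r(x) = inf { p(x+y) - q(y) : y ∈ C }` is a well-defined (real-valued) sublinear
function on `V` satisfying `-p(-x) ≤ r(x) ≤ p(x)` for every `x ∈ V`. -/
theorem infConv_sublinear
    {V : Type*} [AddCommGroup V] [Module ℝ V]
    (C : Set V)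
    (hC0 : (0 : V) ∈ C)
    (hCadd : ∀ x ∈ C, ∀ y ∈ C, x + y ∈ C)
    (hCsmul : ∀ (a : ℝ), 0 ≤ a → ∀ x ∈ C, a • x ∈ C)
    (p : V → ℝ)
    (hp_add : ∀ x y : V, p (x + y) ≤ p x + p y)
    (hp_smul : ∀ (a : ℝ), 0 ≤ a → ∀ x : V, p (a • x) = a * p x)
    (q : V → ℝ)
    (hq_add : ∀ x ∈ C, ∀ y ∈ C, q x + q y ≤ q (x + y))
    (hq_smul : ∀ (a : ℝ), 0 ≤ a → ∀ x ∈ C, q (a • x) = a * q x)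
    (hqp : ∀ x ∈ C, q x ≤ p x) :
    (∀ x : V, {t : ℝ | ∃ y ∈ C, t = p (x + y) - q y}.Nonempty ∧
      BddBelow {t : ℝ | ∃ y ∈ C, t = p (x + y) - q y}) ∧
    (∀ x : V, -p (-x) ≤ infConvFun C p q x ∧ infConvFun C p q x ≤ p x) ∧
    (∀ x y : V, infConvFun C p q (x + y) ≤ infConvFun C p q x + infConvFun C p q y) ∧
    (∀ (a : ℝ), 0 ≤ a → ∀ x : V, infConvFun C p q (a • x) = a * infConvFun C p q x) := by
  have hq0 : q 0 = 0 := by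
    have := hq_smul 0 le_rfl 0 hC0
    simpa using this
  have hp0 : p 0 = 0 := by
    have := hp_smul 0 le_rfl 0
    simpa using this
  have hne : ∀ x : V, {t : ℝ | ∃ y ∈ C, t = p (x + y) - q y}.Nonempty := by
    intro x
    exact ⟨p x - q 0, 0, hC0, by simp⟩
  have hlb : ∀ x : V, ∀ t ∈ {t : ℝ | ∃ y ∈ C, t = p (x + y) - q y}, -p (-x) ≤ t := by
    intro x t ht
    obtain ⟨y, hy, rfl⟩ := ht
    have h1 : p y ≤ p (-x) + p (x + y) := by
      have := hp_add (-x) (x + y)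
      simpa [neg_add_cancel_left] using this
    have h2 : q y ≤ p y := hqp y hy
    linarith
  have hbdd : ∀ x : V, BddBelow {t : ℝ | ∃ y ∈ C, t = p (x + y) - q y} :=
    fun x => ⟨-p (-x), hlb x⟩
  have hle : ∀ x : V, infConvFun C p q x ≤ p x := by
    intro x
    have : p x - q 0 ∈ {t : ℝ | ∃ y ∈ C, t = p (x + y) - q y} := ⟨0, hC0, by simp⟩
    have := csInf_le (hbdd x) this
    simpa [hq0, infConvFun] using this
  have hge : ∀ x : V, -p (-x) ≤ infConvFun C p q x := by
    intro x
    exact le_csInf (hne x) (hlb x)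
  refine ⟨fun x => ⟨hne x, hbdd x⟩, fun x => ⟨hge x, hle x⟩, ?_, ?_⟩
  · intro x y
    have key : ∀ u ∈ C, ∀ v ∈ C,
        infConvFun C p q (x + y) ≤ (p (x + u) - q u) + (p (y + v) - q v) := by
      intro u hu v hv
      have hmem : p (x + y + (u + v)) - q (u + v) ∈
          {t : ℝ | ∃ z ∈ C, t = p (x + y + z) - q z} := ⟨u + v, hCadd u hu v hv, rfl⟩
      have h1 : infConvFun C p q (x + y) ≤ p (x + y + (u + v)) - q (u + v) :=
        csInf_le (hbdd (x + y)) hmem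
      have h2 : p (x + y + (u + v)) ≤ p (x + u) + p (y + v) := by
        have := hp_add (x + u) (y + v)
        have he : x + u + (y + v) = x + y + (u + v) := by abel
        rw [he] at this
        exact this
      have h3 : q u + q v ≤ q (u + v) := hq_add u hu v hv
      linarith
    have h1 : ∀ u ∈ C,
        infConvFun C p q (x + y) - (p (x + u) - q u) ≤ infConvFun C p q y := by
      intro u hu
      apply le_csInf (hne y)
      rintro b ⟨v, hv, rfl⟩
      linarith [key u hu v hv]
    have h2 : infConvFun C p q (x + y) - infConvFun C p q y ≤ infConvFun C p q x := by
      apply le_csInf (hne x)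
      rintro a ⟨u, hu, rfl⟩
      linarith [h1 u hu]
    linarith
  · intro a ha x
    rcases eq_or_lt_of_le ha with rfl | ha'
    · have h0 : infConvFun C p q 0 = 0 := by
        have h1 := hle 0
        have h2 := hge 0
        rw [hp0] at h1
        rw [neg_zero, hp0] at h2
        linarith
      simpa using h0
    · have hset : {t : ℝ | ∃ y ∈ C, t = p (a • x + y) - q y} =
          a • {t : ℝ | ∃ y ∈ C, t = p (x + y) - q y} := by
        ext t
        constructor
        · rintro ⟨y, hy, rfl⟩
          refine ⟨p (x + a⁻¹ • y) - q (a⁻¹ • y), ⟨a⁻¹ • y, hCsmul a⁻¹ (by positivity) y hy, rfl⟩, ?_⟩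
          have h1 : a • x + y = a • (x + a⁻¹ • y) := by
            rw [smul_add, smul_inv_smul₀ (ne_of_gt ha')]
          have hqy : q y = a * q (a⁻¹ • y) := by
            rw [← hq_smul a ha _ (hCsmul a⁻¹ (by positivity) y hy),
              smul_inv_smul₀ (ne_of_gt ha')]
          simp only [smul_eq_mul]
          rw [h1, hp_smul a ha, hqy, mul_sub]
        · rintro ⟨s, ⟨y, hy, rfl⟩, rfl⟩
          refine ⟨a • y, hCsmul a ha y hy, ?_⟩
          simp only [smul_eq_mul]
          rw [← smul_add, hp_smul a ha, hq_smul a ha y hy, mul_sub]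
      unfold infConvFun
      rw [hset, Real.sInf_smul_of_nonneg ha, smul_eq_mul]
end
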